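/- (Improved Gaussian second-order Poincaré inequality.) Let γ be the standard Gaussian probability measure on ℝ^d (density proportional to e^{−|x|²/2}) and L f = Δf − x·∇f the Ornstein–Uhlenbeck operator. Let f be smooth, compactly supported, with ∫ f dγ = 0, and let g be smooth with ∫ g dγ = 0, L g = f and ∫ |∇g|² dγ < ∞. Set c := ∫ ∇g dγ and assume: (i) ∫ |∇g − c|² dγ ≤ − ∫ (∇g − c)·𝕃(∇g − c) dγ (with the right-hand side well-defined), and (ii) ∫ c'·𝕃(∇g − c) dγ = 0 for every constant vector c' ∈ ℝ^d. Then Var_γ(f) ≤ (1/2) ∫ |∇f|² dγ + (1/2) |∫ ∇f dγ|² − (1/2) ∫ |(𝕃 + I)(∇g − c)|² dγ. -/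

import Mathlib

/-!
For the Ornstein–Uhlenbeck operator, differentiating `L g = f` gives the commutation relation
`𝕃(∇g - c) = ∇f + ∇g`, and integrating by parts against the Gaussian gives
`Var(f) = ∫ f L g = -∫ ∇f ⬝ ∇g`. Testing (ii) against the basis vectors yields `∫ ∇f = -c`.
With `F = ∇g - c`, every term of the bound is then a linear combination of `∫ |F|²`,
`∫ ∇f ⬝ F` and `|c|²`, and the inequality collapses to (i), which reads
`2 ∫ |F|² + ∫ ∇f ⬝ F ≤ 0`.
-/

open Real MeasureTheory Matrix

noncomputable section

abbrev Euc (d : ℕ) := Fin d → ℝ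

/-- partial derivative in direction `i`. -/
def pd {d : ℕ} (i : Fin d) (f : Euc d → ℝ) (x : Euc d) : ℝ :=
  fderiv ℝ f x (Pi.single i 1)

/-- Euclidean gradient. -/
def gradv {d : ℕ} (f : Euc d → ℝ) (x : Euc d) : Euc d := fun i => pd i f x

/-- The diffusion operator `L f = Δ f - ∇V ⋅ ∇f`. -/
def Lop {d : ℕ} (V f : Euc d → ℝ) (x : Euc d) : ℝ :=
  (∑ i, pd i (pd i f) x) - gradv V x ⬝ᵥ gradv f x

/-- Hessian matrix. -/
def hessM {d : ℕ} (V : Euc d → ℝ) (x : Euc d) : Matrix (Fin d) (Fin d) ℝ :=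
  Matrix.of fun i j => pd i (pd j V) x

/-- Componentwise application of `L` to a vector field. -/
def vecL {d : ℕ} (V : Euc d → ℝ) (F : Euc d → Euc d) (x : Euc d) : Euc d :=
  fun i => Lop V (fun y => F y i) x

/-- Entrywise application of `L` to a matrix field. -/
def matL {d : ℕ} (V : Euc d → ℝ) (M : Euc d → Matrix (Fin d) (Fin d) ℝ) (x : Euc d) :
    Matrix (Fin d) (Fin d) ℝ :=
  Matrix.of fun i j => Lop V (fun y => M y i j) x

/-- Jacobian matrix of a vector field: `(jac H x) i j = ∂_j H_i (x)`. -/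
def jac {d : ℕ} (H : Euc d → Euc d) (x : Euc d) : Matrix (Fin d) (Fin d) ℝ :=
  Matrix.of fun i j => pd j (fun y => H y i) x

/-- `(∇A⁻¹ ∇F)_i = ∑_{j,k} ∂_k (A⁻¹)_{i,j} ∂_k F_j`. -/
def gAinvG {d : ℕ} (A : Euc d → Matrix (Fin d) (Fin d) ℝ) (F : Euc d → Euc d) (x : Euc d) :
    Euc d :=
  fun i => ∑ j, ∑ k, pd k (fun y => (A y)⁻¹ i j) x * pd k (fun y => F y j) x

/-- The operator `𝕃_A F = 𝕃 F + 2 A ∇A⁻¹ ∇F`. -/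
def LA {d : ℕ} (V : Euc d → ℝ) (A : Euc d → Matrix (Fin d) (Fin d) ℝ) (F : Euc d → Euc d)
    (x : Euc d) : Euc d :=
  vecL V F x + (2 : ℝ) • (A x *ᵥ gAinvG A F x)

/-- The matrix field `M_A = A (∇²V) A⁻¹ - A (𝕃 A⁻¹)`. -/
def MA {d : ℕ} (V : Euc d → ℝ) (A : Euc d → Matrix (Fin d) (Fin d) ℝ) (x : Euc d) :
    Matrix (Fin d) (Fin d) ℝ :=
  A x * hessM V x * (A x)⁻¹ - A x * matL V (fun y => (A y)⁻¹) x

/-- The Schrödinger-type operator `𝕃_A^{M_A} F = 𝕃_A F - M_A F`. -/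
def LAM {d : ℕ} (V : Euc d → ℝ) (A : Euc d → Matrix (Fin d) (Fin d) ℝ) (F : Euc d → Euc d)
    (x : Euc d) : Euc d :=
  LA V A F x - MA V A x *ᵥ F x

/-- The matrix field `S = (A Aᵀ)⁻¹`. -/
def Smat {d : ℕ} (A : Euc d → Matrix (Fin d) (Fin d) ℝ) (x : Euc d) :
    Matrix (Fin d) (Fin d) ℝ :=
  (A x * (A x)ᵀ)⁻¹

/-- The probability measure with density proportional to `e^{-V}`. -/
def gibbs {d : ℕ} (V : Euc d → ℝ) : Measure (Euc d) :=
  (ENNReal.ofReal (∫ x, Real.exp (-V x)))⁻¹ •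
    MeasureTheory.volume.withDensity fun x => ENNReal.ofReal (Real.exp (-V x))

/-- Variance with respect to a measure. -/
def Var' {d : ℕ} (μ : Measure (Euc d)) (f : Euc d → ℝ) : ℝ :=
  (∫ x, f x ^ 2 ∂μ) - (∫ x, f x ∂μ) ^ 2

open scoped ContDiff

section L2VectorFields

variable {Ω ι : Type*} [MeasurableSpace Ω] {μ : Measure Ω} [Fintype ι]

lemma integrable_dotProduct {u v : Ω → ι → ℝ} (hu : ∀ i, MemLp (fun x => u x i) 2 μ)
    (hv : ∀ i, MemLp (fun x => v x i) 2 μ) : Integrable (fun x => u x ⬝ᵥ v x) μ :=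
  integrable_finsetSum _ fun i _ => (hu i).integrable_mul (hv i)

lemma integral_const_dotProduct {u : Ω → ι → ℝ} (hu : ∀ i, Integrable (fun x => u x i) μ)
    (c : ι → ℝ) : ∫ x, c ⬝ᵥ u x ∂μ = c ⬝ᵥ fun i => ∫ x, u x i ∂μ := by
  simp only [dotProduct]
  rw [integral_finsetSum _ fun i _ => (hu i).const_mul (c i)]
  simp only [integral_const_mul]

lemma memLp_two_apply_of_integrable_dotProduct_self {u : Ω → ι → ℝ}
    (hu : ∀ i, AEStronglyMeasurable (fun x => u x i) μ)
    (h : Integrable (fun x => u x ⬝ᵥ u x) μ) (i : ι) : MemLp (fun x => u x i) 2 μ := by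
  refine (memLp_two_iff_integrable_sq (hu i)).2 (h.mono' ((hu i).pow 2) ?_)
  filter_upwards with x
  simpa [dotProduct, sq] using
    Finset.single_le_sum (fun j _ => mul_self_nonneg (u x j)) (Finset.mem_univ i)

theorem neg_integral_dotProduct_le_of_poincare [IsProbabilityMeasure μ] {a G : Ω → ι → ℝ}
    {c : ι → ℝ} (ha : ∀ i, MemLp (fun x => a x i) 2 μ) (hG : ∀ i, MemLp (fun x => G x i) 2 μ)
    (hc : ∀ i, ∫ x, G x i ∂μ = c i) (ha_mean : ∀ i, ∫ x, a x i ∂μ = -c i)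
    (hP : ∫ x, (G x - c) ⬝ᵥ (G x - c) ∂μ ≤ -∫ x, (G x - c) ⬝ᵥ (a x + G x) ∂μ) :
    -∫ x, a x ⬝ᵥ G x ∂μ ≤ (1 / 2) * ∫ x, a x ⬝ᵥ a x ∂μ + (1 / 2) * ∑ i, (∫ x, a x i ∂μ) ^ 2
      - (1 / 2) * ∫ x, (a x + G x + (G x - c)) ⬝ᵥ (a x + G x + (G x - c)) ∂μ := by
  have hF (i : ι) : MemLp (fun x => (G x - c) i) 2 μ := (hG i).sub (memLp_const (c i))
  have hX (i : ι) : MemLp (fun x => (a x + G x + (G x - c)) i) 2 μ :=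
    ((ha i).add (hG i)).add (hF i)
  have hAG (i : ι) : MemLp (fun x => (a x + G x) i) 2 μ := (ha i).add (hG i)
  have hF_mean : ∫ x, c ⬝ᵥ (G x - c) ∂μ = 0 := by
    rw [integral_const_dotProduct fun i => (hF i).integrable one_le_two]
    simp [integral_sub ((hG _).integrable one_le_two), hc]
  have hsq : ∑ i, (∫ x, a x i ∂μ) ^ 2 = c ⬝ᵥ c := by
    simp [ha_mean, dotProduct, sq]
  -- Integrated, this identity turns the claim into `hP`, since `∫ c ⬝ᵥ (G - c) = 0`.
  have hpt (x : Ω) : (1 / 2) * a x ⬝ᵥ a x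
      - (1 / 2) * (a x + G x + (G x - c)) ⬝ᵥ (a x + G x + (G x - c)) + a x ⬝ᵥ G x
      = -((G x - c) ⬝ᵥ (G x - c) + (G x - c) ⬝ᵥ (a x + G x))
        - c ⬝ᵥ (G x - c) - (1 / 2) * c ⬝ᵥ c := by
    simp only [dotProduct, Finset.mul_sum, ← Finset.sum_add_distrib, ← Finset.sum_sub_distrib,
      ← Finset.sum_neg_distrib]
    refine Finset.sum_congr rfl fun i _ => ?_
    simp only [Pi.add_apply, Pi.sub_apply]
    ring
  have iaa := integrable_dotProduct ha ha
  have iaG := integrable_dotProduct ha hG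
  have iXX := integrable_dotProduct hX hX
  have iFF := integrable_dotProduct hF hF
  have iFAG := integrable_dotProduct hF hAG
  have icF := integrable_dotProduct (u := fun _ => c) (fun i => memLp_const (c i)) hF
  have hintegral := integral_congr_ae (μ := μ) (Filter.Eventually.of_forall hpt)
  rw [integral_add (by fun_prop) iaG, integral_sub (by fun_prop) (by fun_prop),
    integral_sub (by fun_prop) (integrable_const _), integral_sub (by fun_prop) icF,
    integral_neg, integral_add iFF iFAG, hF_mean, integral_const_mul, integral_const_mul,
    integral_const, probReal_univ, one_smul] at hintegral
  rw [hsq]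
  linarith

end L2VectorFields

variable {d : ℕ}

section PartialDerivatives

lemma contDiff_pd {n : WithTop ℕ∞} {h : Euc d → ℝ} (hh : ContDiff ℝ (n + 1) h) (i : Fin d) :
    ContDiff ℝ n (pd i h) :=
  (hh.fderiv_right le_rfl).clm_apply contDiff_const

lemma ContDiff.pd {h : Euc d → ℝ} (hh : ContDiff ℝ ∞ h) (i : Fin d) : ContDiff ℝ ∞ (pd i h) :=
  contDiff_pd (hh.of_le (by simp)) i

lemma HasCompactSupport.pd {h : Euc d → ℝ} (hh : HasCompactSupport h) (i : Fin d) :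
    HasCompactSupport (pd i h) :=
  (hh.fderiv ℝ).comp_left (g := fun L : Euc d →L[ℝ] ℝ => L (Pi.single i 1)) rfl

lemma pd_sub {a b : Euc d → ℝ} {x : Euc d} (ha : DifferentiableAt ℝ a x)
    (hb : DifferentiableAt ℝ b x) (i : Fin d) :
    pd i (fun y => a y - b y) x = pd i a x - pd i b x := by
  simp [pd, fderiv_fun_sub ha hb]

lemma pd_sub_const (a : Euc d → ℝ) (k : ℝ) (i : Fin d) : pd i (fun y => a y - k) = pd i a := by
  ext x
  simp [pd, fderiv_sub_const]

lemma pd_mul {a b : Euc d → ℝ} {x : Euc d} (ha : DifferentiableAt ℝ a x)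
    (hb : DifferentiableAt ℝ b x) (i : Fin d) :
    pd i (fun y => a y * b y) x = pd i a x * b x + a x * pd i b x := by
  simp only [pd, fderiv_fun_mul ha hb, _root_.add_apply,
    _root_.smul_apply, smul_eq_mul]
  ring

lemma pd_sum {ι : Type*} (s : Finset ι) {a : ι → Euc d → ℝ} {x : Euc d}
    (ha : ∀ j ∈ s, DifferentiableAt ℝ (a j) x) (i : Fin d) :
    pd i (fun y => ∑ j ∈ s, a j y) x = ∑ j ∈ s, pd i (a j) x := by
  simp [pd, fderiv_fun_sum ha]

lemma pd_apply (i j : Fin d) (x : Euc d) :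
    pd i (fun y : Euc d => y j) x = (Pi.single i 1 : Euc d) j := by
  simp [pd, (hasFDerivAt_apply (𝕜 := ℝ) j x).fderiv]

lemma pd_exp_neg {a : Euc d → ℝ} {x : Euc d} (ha : DifferentiableAt ℝ a x) (i : Fin d) :
    pd i (fun y => exp (-a y)) x = -(exp (-a x) * pd i a x) := by
  rw [pd, fderiv_exp ha.fun_neg]
  simp [pd]

lemma pd_pd_eq_fderiv_fderiv {h : Euc d → ℝ} {x : Euc d} (hh : ContDiffAt ℝ 2 h x)
    (i j : Fin d) :
    pd i (pd j h) x = fderiv ℝ (fderiv ℝ h) x (Pi.single i 1) (Pi.single j 1) := by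
  have hD : DifferentiableAt ℝ (fderiv ℝ h) x :=
    (hh.fderiv_right (m := 1) le_rfl).differentiableAt one_ne_zero
  change fderiv ℝ (fun y => fderiv ℝ h y (Pi.single j 1)) x (Pi.single i 1) = _
  rw [fderiv_clm_apply hD (differentiableAt_const _)]
  simp

lemma pd_comm {h : Euc d → ℝ} {x : Euc d} (hh : ContDiffAt ℝ 2 h x) (i j : Fin d) :
    pd i (pd j h) x = pd j (pd i h) x := by
  rw [pd_pd_eq_fderiv_fderiv hh, pd_pd_eq_fderiv_fderiv hh]
  exact (hh.isSymmSndFDerivAt (by simp [minSmoothness_of_isRCLikeNormedField])).eq _ _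

end PartialDerivatives

section OrnsteinUhlenbeck

def gaussPotential (x : Euc d) : ℝ := (∑ i, x i ^ 2) / 2

lemma contDiff_gaussPotential {n : WithTop ℕ∞} : ContDiff ℝ n (gaussPotential (d := d)) :=
  (ContDiff.sum fun j _ => (contDiff_apply ℝ ℝ j).pow 2).div_const 2

lemma pd_gaussPotential (i : Fin d) (x : Euc d) : pd i gaussPotential x = x i := by
  have h : HasFDerivAt (fun y : Euc d => ∑ j, y j ^ 2) _ x :=
    HasFDerivAt.fun_sum (u := Finset.univ) fun j _ => (hasFDerivAt_apply (𝕜 := ℝ) j x).pow 2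
  have hV : gaussPotential = fun y : Euc d => (∑ j, y j ^ 2) * 2⁻¹ :=
    funext fun y => div_eq_mul_inv _ _
  rw [pd, hV, (HasFDerivAt.mul_const h 2⁻¹).fderiv]
  simp [Pi.single_apply]

lemma Lop_gaussPotential (h : Euc d → ℝ) :
    Lop gaussPotential h = fun x => ∑ j, pd j (pd j h) x - ∑ j, x j * pd j h x := by
  ext x
  have hgrad : gradv gaussPotential x = x := funext fun i => pd_gaussPotential i x
  rw [Lop, hgrad]
  rfl

lemma pd_Lop_gaussPotential {h : Euc d → ℝ} (hh : ContDiff ℝ ∞ h) (i : Fin d) (x : Euc d) :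
    pd i (Lop gaussPotential h) x = Lop gaussPotential (pd i h) x - pd i h x := by
  have hdiff : ∀ {k : Euc d → ℝ}, ContDiff ℝ ∞ k → ∀ y, DifferentiableAt ℝ k y :=
    fun hk y => hk.differentiable (by simp) y
  have hC2 : ∀ {k : Euc d → ℝ}, ContDiff ℝ ∞ k → ∀ y, ContDiffAt ℝ 2 k y :=
    fun hk y => (hk.of_le ENat.LEInfty.out).contDiffAt
  have hcomm (j : Fin d) : pd i (pd j h) = pd j (pd i h) :=
    funext fun y => pd_comm (hC2 hh y) i j
  have hlap (j : Fin d) : DifferentiableAt ℝ (pd j (pd j h)) x := hdiff ((hh.pd j).pd j) x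
  have hdrift (j : Fin d) : DifferentiableAt ℝ (fun y : Euc d => y j * pd j h y) x :=
    (differentiableAt_apply j x).fun_mul (hdiff (hh.pd j) x)
  rw [Lop_gaussPotential, Lop_gaussPotential,
    pd_sub (DifferentiableAt.fun_sum fun j _ => hlap j)
      (DifferentiableAt.fun_sum fun j _ => hdrift j),
    pd_sum _ fun j _ => hlap j, pd_sum _ fun j _ => hdrift j]
  simp only [pd_mul (differentiableAt_apply _ x) (hdiff (hh.pd _) x), pd_apply,
    Finset.sum_add_distrib, Pi.single_apply, ite_mul, one_mul, zero_mul, Finset.sum_ite_eq',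
    Finset.mem_univ, if_true, pd_comm (hC2 (hh.pd _) x) i, hcomm]
  ring

lemma vecL_gaussPotential_gradv_sub_const {g : Euc d → ℝ} (hg : ContDiff ℝ ∞ g) (c : Euc d)
    (x : Euc d) :
    vecL gaussPotential (fun y => gradv g y - c) x
      = gradv (Lop gaussPotential g) x + gradv g x := by
  ext i
  have hLop : Lop gaussPotential (fun y => pd i g y - c i) = Lop gaussPotential (pd i g) := by
    ext y
    unfold Lop gradv
    simp only [pd_sub_const]
  simp only [vecL, Pi.sub_apply, Pi.add_apply, gradv]
  rw [hLop, pd_Lop_gaussPotential hg, sub_add_cancel]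

end OrnsteinUhlenbeck

section GibbsMeasure

lemma integral_gibbs {V : Euc d → ℝ} (hV : Continuous V) (h : Euc d → ℝ) :
    ∫ x, h x ∂(gibbs V) = (∫ x, exp (-V x))⁻¹ * ∫ x, h x * exp (-V x) := by
  have hmeas : Measurable fun x => (exp (-V x)).toNNReal :=
    (continuous_real_toNNReal.comp hV.neg.rexp).measurable
  rw [gibbs, integral_smul_measure, ENNReal.toReal_inv,
    ENNReal.toReal_ofReal (integral_nonneg fun x => (exp_pos _).le), smul_eq_mul]
  congr 1
  simp only [ENNReal.ofReal]
  rw [integral_withDensity_eq_integral_smul hmeas]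
  congr 1 with x
  simp [NNReal.smul_def, Real.coe_toNNReal _ (exp_pos _).le, mul_comm]

lemma isProbabilityMeasure_gibbs {V : Euc d → ℝ} (hV : Integrable fun x => exp (-V x)) :
    IsProbabilityMeasure (gibbs V) := by
  constructor
  rw [gibbs, Measure.smul_apply, withDensity_apply _ MeasurableSet.univ, Measure.restrict_univ,
    ← ofReal_integral_eq_lintegral_ofReal hV (Filter.Eventually.of_forall fun x => (exp_pos _).le),
    smul_eq_mul]
  exact ENNReal.inv_mul_cancel (ENNReal.ofReal_pos.mpr (integral_exp_pos hV)).ne'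
    ENNReal.ofReal_ne_top

lemma integrable_exp_neg_gaussPotential :
    Integrable fun x : Euc d => exp (-gaussPotential x) := by
  have h : (fun x : Euc d => exp (-gaussPotential x))
      = fun x => ∏ i, exp (-(1 / 2) * x i ^ 2) := by
    ext x
    rw [← exp_sum, gaussPotential, Finset.sum_div, ← Finset.sum_neg_distrib]
    congr 1
    exact Finset.sum_congr rfl fun i _ => by ring
  rw [h]
  exact Integrable.fintype_prod (f := fun _ t => exp (-(1 / 2) * t ^ 2)) fun _ =>
    integrable_exp_neg_mul_sq (by norm_num)

lemma integral_mul_pd {φ h : Euc d → ℝ} (hφ : ContDiff ℝ 1 φ) (hφc : HasCompactSupport φ)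
    (hh : ContDiff ℝ 1 h) (i : Fin d) :
    ∫ x, φ x * pd i h x = -∫ x, pd i φ x * h x := by
  have hφ' : Continuous (pd i φ) := (contDiff_pd (n := 0) hφ i).continuous
  have hh' : Continuous (pd i h) := (contDiff_pd (n := 0) hh i).continuous
  exact integral_mul_fderiv_eq_neg_fderiv_mul_of_integrable
    ((hφ'.mul hh.continuous).integrable_of_hasCompactSupport (hφc.pd i).mul_right)
    ((hφ.continuous.mul hh').integrable_of_hasCompactSupport hφc.mul_right)
    ((hφ.continuous.mul hh.continuous).integrable_of_hasCompactSupport hφc.mul_right)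
    (fun x _ => hφ.differentiable one_ne_zero x) (fun x _ => hh.differentiable one_ne_zero x)

lemma Lop_mul_exp_neg {V ψ : Euc d → ℝ} (hV : ContDiff ℝ 1 V) (hψ : ContDiff ℝ 2 ψ)
    (x : Euc d) :
    Lop V ψ x * exp (-V x) = ∑ j, pd j (fun y => pd j ψ y * exp (-V y)) x := by
  have hdψ : ∀ j, DifferentiableAt ℝ (pd j ψ) x := fun j =>
    (contDiff_pd (n := 1) hψ j).differentiable one_ne_zero x
  have hdV : DifferentiableAt ℝ V x := hV.differentiable one_ne_zero x
  simp only [Lop, gradv, dotProduct, Finset.sum_mul, ← Finset.sum_sub_distrib]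
  refine Finset.sum_congr rfl fun j _ => ?_
  rw [pd_mul (hdψ j) hdV.fun_neg.exp, pd_exp_neg hdV]
  ring

theorem integral_mul_Lop_gibbs {V φ ψ : Euc d → ℝ} (hV : ContDiff ℝ 1 V) (hφ : ContDiff ℝ 1 φ)
    (hφc : HasCompactSupport φ) (hψ : ContDiff ℝ 2 ψ) :
    ∫ x, φ x * Lop V ψ x ∂(gibbs V) = -∫ x, gradv φ x ⬝ᵥ gradv ψ x ∂(gibbs V) := by
  set w : Fin d → Euc d → ℝ := fun j y => pd j ψ y * exp (-V y)
  have hw : ∀ j, ContDiff ℝ 1 (w j) := fun j => (contDiff_pd (n := 1) hψ j).mul hV.neg.exp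
  have hφw (j : Fin d) : Integrable fun x => φ x * pd j (w j) x :=
    (hφ.continuous.mul (contDiff_pd (n := 0) (hw j) j).continuous
      ).integrable_of_hasCompactSupport hφc.mul_right
  have hφ'w (j : Fin d) : Integrable fun x => pd j φ x * w j x :=
    ((contDiff_pd (n := 0) hφ j).continuous.mul (hw j).continuous
      ).integrable_of_hasCompactSupport (hφc.pd j).mul_right
  rw [integral_gibbs hV.continuous, integral_gibbs hV.continuous, ← mul_neg]
  congr 1
  calc ∫ x, φ x * Lop V ψ x * exp (-V x)
      = ∫ x, ∑ j, φ x * pd j (w j) x := by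
        congr with x
        rw [mul_assoc, Lop_mul_exp_neg hV hψ, Finset.mul_sum]
    _ = ∑ j, ∫ x, φ x * pd j (w j) x := integral_finsetSum _ fun j _ => hφw j
    _ = ∑ j, -∫ x, pd j φ x * w j x :=
        Finset.sum_congr rfl fun j _ => integral_mul_pd hφ hφc (hw j) j
    _ = -∫ x, ∑ j, pd j φ x * w j x := by
        rw [integral_finsetSum _ fun j _ => hφ'w j, Finset.sum_neg_distrib]
    _ = -∫ x, gradv φ x ⬝ᵥ gradv ψ x * exp (-V x) := by
        congr with x
        simp only [w, gradv, dotProduct, Finset.sum_mul, mul_assoc]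

end GibbsMeasure

theorem stmt_13_general {d : ℕ}
    (V : Euc d → ℝ) (hVdef : ∀ x, V x = (∑ i, x i ^ 2) / 2)
    (f : Euc d → ℝ) (hf : ContDiff ℝ (⊤ : ℕ∞) f) (hfc : HasCompactSupport f)
    (hf0 : (∫ x, f x ∂(gibbs V)) = 0)
    (g : Euc d → ℝ) (hg : ContDiff ℝ (⊤ : ℕ∞) g)
    (hpois : ∀ x, Lop V g x = f x)
    (hgrad : Integrable (fun x => gradv g x ⬝ᵥ gradv g x) (gibbs V))
    (c : Euc d) (hc : ∀ i, c i = ∫ x, pd i g x ∂(gibbs V))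
    (hPoinc : (∫ x, (gradv g x - c) ⬝ᵥ (gradv g x - c) ∂(gibbs V))
      ≤ - ∫ x, (gradv g x - c) ⬝ᵥ vecL V (fun y => gradv g y - c) x ∂(gibbs V))
    (hOrth : ∀ c' : Euc d,
      (∫ x, c' ⬝ᵥ vecL V (fun y => gradv g y - c) x ∂(gibbs V)) = 0) :
    Var' (gibbs V) f
      ≤ (1 / 2) * (∫ x, gradv f x ⬝ᵥ gradv f x ∂(gibbs V))
        + (1 / 2) * (∑ i, (∫ x, pd i f x ∂(gibbs V)) ^ 2)
        - (1 / 2) * ∫ x, (vecL V (fun y => gradv g y - c) x + (gradv g x - c)) ⬝ᵥ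
            (vecL V (fun y => gradv g y - c) x + (gradv g x - c)) ∂(gibbs V) := by
  obtain rfl : V = gaussPotential := funext hVdef
  have := isProbabilityMeasure_gibbs (integrable_exp_neg_gaussPotential (d := d))
  have hLop : Lop gaussPotential g = f := funext hpois
  have hL (x : Euc d) :
      vecL gaussPotential (fun y => gradv g y - c) x = gradv f x + gradv g x := by
    rw [vecL_gaussPotential_gradv_sub_const hg, hLop]
  have hfL2 (i : Fin d) : MemLp (fun x => gradv f x i) 2 (gibbs gaussPotential) :=
    (hf.pd i).continuous.memLp_of_hasCompactSupport (hfc.pd i)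
  have hgL2 : ∀ i, MemLp (fun x => gradv g x i) 2 (gibbs gaussPotential) :=
    memLp_two_apply_of_integrable_dotProduct_self
      (fun i => (hg.pd i).continuous.aestronglyMeasurable) hgrad
  have hmean (i : Fin d) : ∫ x, gradv f x i ∂(gibbs gaussPotential) = -c i := by
    have h := hOrth (Pi.single i 1)
    simp only [hL, single_dotProduct, one_mul, Pi.add_apply] at h
    rw [integral_add ((hfL2 i).integrable one_le_two) ((hgL2 i).integrable one_le_two)] at h
    linarith [show c i = ∫ x, gradv g x i ∂(gibbs gaussPotential) from hc i]
  have hvar : Var' (gibbs gaussPotential) f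
      = -∫ x, gradv f x ⬝ᵥ gradv g x ∂(gibbs gaussPotential) := by
    rw [Var', hf0, ← integral_mul_Lop_gibbs contDiff_gaussPotential
      (hf.of_le ENat.LEInfty.out) hfc (hg.of_le ENat.LEInfty.out), hLop]
    simp [sq]
  simp only [hL] at hPoinc ⊢
  rw [hvar]
  exact neg_integral_dotProduct_le_of_poincare hfL2 hgL2 (fun i => (hc i).symm) hmean hPoinc

/-- improved Gaussian second-order Poincaré inequality. -/
theorem stmt_13 {d : ℕ} (hd : 1 ≤ d)
    (V : Euc d → ℝ) (hVdef : ∀ x, V x = (∑ i, x i ^ 2) / 2)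
    (f : Euc d → ℝ) (hf : ContDiff ℝ (⊤ : ℕ∞) f) (hfc : HasCompactSupport f)
    (hf0 : (∫ x, f x ∂(gibbs V)) = 0)
    (g : Euc d → ℝ) (hg : ContDiff ℝ (⊤ : ℕ∞) g) (hg0 : (∫ x, g x ∂(gibbs V)) = 0)
    (hpois : ∀ x, Lop V g x = f x)
    (hgrad : Integrable (fun x => gradv g x ⬝ᵥ gradv g x) (gibbs V))
    (c : Euc d) (hc : ∀ i, c i = ∫ x, pd i g x ∂(gibbs V))
    (hPoincInt : Integrable
      (fun x => (gradv g x - c) ⬝ᵥ vecL V (fun y => gradv g y - c) x) (gibbs V))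
    (hPoinc : (∫ x, (gradv g x - c) ⬝ᵥ (gradv g x - c) ∂(gibbs V))
      ≤ - ∫ x, (gradv g x - c) ⬝ᵥ vecL V (fun y => gradv g y - c) x ∂(gibbs V))
    (hOrth : ∀ c' : Euc d,
      (∫ x, c' ⬝ᵥ vecL V (fun y => gradv g y - c) x ∂(gibbs V)) = 0) :
    Var' (gibbs V) f
      ≤ (1 / 2) * (∫ x, gradv f x ⬝ᵥ gradv f x ∂(gibbs V))
        + (1 / 2) * (∑ i, (∫ x, pd i f x ∂(gibbs V)) ^ 2)
        - (1 / 2) * ∫ x, (vecL V (fun y => gradv g y - c) x + (gradv g x - c)) ⬝ᵥ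
            (vecL V (fun y => gradv g y - c) x + (gradv g x - c)) ∂(gibbs V) :=
  stmt_13_general V hVdef f hf hfc hf0 g hg hpois hgrad c hc hPoinc hOrth
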